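/- arXiv:1612.00941 — 3 statements merged into one kernel-verified Lean document; each statement's English description precedes it below -/
import Mathlib

section
/- Let f = h + conj(g) be a harmonic mapping on the unit disk with h, g analytic. Then for each r in [0,1), the length ℓ(γ_r) = r ∫₀^{2π} |h'(r e^{it}) - e^{-2it} conj(g'(r e^{it}))| dt of the image of the circle of radius r is a nondecreasing function of r on [0,1). -/
open MeasureTheory Metric Real Complex intervalIntegral

lemma cauchyFormula {R : ℝ} (hR : 0 < R) {A : ℂ → ℂ} (hA : DiffContOnCl ℂ A (ball 0 R))
    {w : ℂ} (hw : ‖w‖ < R) :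
    ∫ s in (0:ℝ)..(2*Real.pi), circleMap 0 R s / (circleMap 0 R s - w) * A (circleMap 0 R s)
      = (2*Real.pi : ℝ) * A w := by
  have hwmem : w ∈ ball (0:ℂ) R := by simpa [Complex.dist_eq] using hw
  have h1 := hA.circleIntegral_sub_inv_smul hwmem
  rw [circleIntegral] at h1
  simp only [deriv_circleMap, smul_eq_mul] at h1
  have h2 : ∀ θ : ℝ, circleMap 0 R θ * Complex.I * ((circleMap 0 R θ - w)⁻¹ * A (circleMap 0 R θ))
      = Complex.I * (circleMap 0 R θ / (circleMap 0 R θ - w) * A (circleMap 0 R θ)) := by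
    intro θ; ring
  simp only [h2] at h1
  rw [intervalIntegral.integral_const_mul] at h1
  apply mul_left_cancel₀ Complex.I_ne_zero
  rw [h1]; push_cast; ring

lemma meanValue {R : ℝ} (hR : 0 < R) {A : ℂ → ℂ} (hA : DiffContOnCl ℂ A (ball 0 R)) :
    ∫ s in (0:ℝ)..(2*Real.pi), A (circleMap 0 R s) = (2*Real.pi : ℝ) * A 0 := by
  have h := cauchyFormula hR hA (w := 0) (by simpa using hR)
  rw [← h]
  apply intervalIntegral.integral_congr
  intro s _
  simp [div_self (circleMap_ne_center hR.ne')]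

noncomputable def Pk (R : ℝ) (w : ℂ) (s : ℝ) : ℝ :=
  (R^2 - (‖w‖)^2) / (‖(circleMap 0 R s - w)‖)^2

lemma Pk_nonneg {R : ℝ} {w : ℂ} (hw : ‖w‖ < R) (s : ℝ) : 0 ≤ Pk R w s := by
  apply div_nonneg
  · nlinarith [norm_nonneg w]
  · positivity

lemma denom_ne {R : ℝ} (hR : 0 < R) {w z : ℂ} (hw : ‖w‖ < R)
    (hz : ‖z‖ ≤ R) : (R:ℂ)^2 - (starRingEnd ℂ) w * z ≠ 0 := by
  intro hcon
  rw [sub_eq_zero] at hcon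
  have := congrArg (‖·‖) hcon
  simp [norm_mul, Complex.norm_real, abs_of_pos hR] at this
  nlinarith [norm_nonneg w, norm_nonneg z]

lemma sub_ne' {R : ℝ} {w z : ℂ} (hw : ‖w‖ < R) (hz : ‖z‖ = R) :
    z - w ≠ 0 := by
  intro hcon
  rw [sub_eq_zero] at hcon
  rw [hcon] at hz; exact absurd hz (ne_of_lt hw)

lemma kernel_eq {R : ℝ} (hR : 0 < R) {w : ℂ} (hw : ‖w‖ < R) (s : ℝ) :
    ((Pk R w s : ℝ) : ℂ) = circleMap 0 R s / (circleMap 0 R s - w)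
      + (R:ℂ)^2 / ((R:ℂ)^2 - (starRingEnd ℂ) w * circleMap 0 R s) - 1 := by
  set ζ := circleMap 0 R s with hζ
  have habs : ‖ζ‖ = R := by
    simp [hζ, norm_circleMap_zero, abs_of_pos hR]
  have hζ0 : ζ ≠ 0 := circleMap_ne_center hR.ne'
  have hζw : ζ - w ≠ 0 := sub_ne' hw habs
  have hζwc : (starRingEnd ℂ) ζ - (starRingEnd ℂ) w ≠ 0 := by
    rw [← map_sub, ne_eq, map_eq_zero]
    exact hζw
  have hden : (R:ℂ)^2 - (starRingEnd ℂ) w * ζ ≠ 0 := denom_ne hR hw habs.le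
  have hR2 : (R:ℂ)^2 = ζ * (starRingEnd ℂ) ζ := by
    rw [Complex.mul_conj, ← Complex.sq_norm, habs]; norm_cast
  have hW : ((‖w‖ : ℝ):ℂ)^2 = w * (starRingEnd ℂ) w := by
    rw [Complex.mul_conj, ← Complex.sq_norm]; norm_cast
  have hZW : ((‖(ζ - w)‖ : ℝ):ℂ)^2 = (ζ - w) * ((starRingEnd ℂ) ζ - (starRingEnd ℂ) w) := by
    rw [← map_sub, Complex.mul_conj, ← Complex.sq_norm]; norm_cast
  have hden' : ζ * (starRingEnd ℂ) ζ - (starRingEnd ℂ) w * ζ ≠ 0 := by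
    rw [← hR2]; exact hden
  rw [Pk]
  push_cast
  rw [hW, hZW, hR2]
  rw [hR2] at hden
  field_simp
  ring

lemma cont_comp {R : ℝ} (hR : 0 < R) {A : ℂ → ℂ} (hA : DiffContOnCl ℂ A (ball 0 R)) :
    Continuous (fun s => A (circleMap 0 R s)) := by
  have h1 : ContinuousOn A (closedBall 0 R) := by
    have := hA.continuousOn
    rwa [closure_ball 0 hR.ne'] at this
  exact h1.comp_continuous (continuous_circleMap 0 R)
    (fun s => circleMap_mem_closedBall 0 hR.le s)

lemma poissonRep {R : ℝ} (hR : 0 < R) {A : ℂ → ℂ} (hA : DiffContOnCl ℂ A (ball 0 R))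
    {w : ℂ} (hw : ‖w‖ < R) :
    ∫ s in (0:ℝ)..(2*Real.pi), ((Pk R w s : ℝ) : ℂ) * A (circleMap 0 R s)
      = (2*Real.pi : ℝ) * A w := by
  set G : ℂ → ℂ := fun z => (R:ℂ)^2 / ((R:ℂ)^2 - (starRingEnd ℂ) w * z) * A z with hGdef
  have hball : ∀ z ∈ closedBall (0:ℂ) R, (R:ℂ)^2 - (starRingEnd ℂ) w * z ≠ 0 := by
    intro z hz
    exact denom_ne hR hw (by simpa [Complex.dist_eq] using hz)
  have hG : DiffContOnCl ℂ G (ball 0 R) := by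
    constructor
    · apply DifferentiableOn.mul _ hA.differentiableOn
      apply DifferentiableOn.div (differentiableOn_const _)
      · exact (differentiableOn_const _).sub ((differentiableOn_const _).mul differentiableOn_id)
      · intro z hz; exact hball z (ball_subset_closedBall hz)
    · rw [closure_ball 0 hR.ne']
      have hAc := hA.continuousOn
      rw [closure_ball 0 hR.ne'] at hAc
      apply ContinuousOn.mul _ hAc
      apply ContinuousOn.div continuousOn_const
      · exact (continuousOn_const.sub (continuousOn_const.mul continuousOn_id))
      · exact hball
  have hR2 : (R:ℂ)^2 ≠ 0 := pow_ne_zero 2 (Complex.ofReal_ne_zero.mpr hR.ne')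
  have hG0 : G 0 = A 0 := by simp [hGdef, hR2]
  have e1 := cauchyFormula hR hA hw
  have e2 := meanValue hR hG
  have e3 := meanValue hR hA
  rw [hG0] at e2
  have habs : ∀ s : ℝ, ‖(circleMap 0 R s)‖ = R := by
    intro s; simp [norm_circleMap_zero, abs_of_pos hR]
  have c1 : Continuous (fun s => circleMap 0 R s / (circleMap 0 R s - w) * A (circleMap 0 R s)) := by
    apply Continuous.mul _ (cont_comp hR hA)
    exact (continuous_circleMap 0 R).div ((continuous_circleMap 0 R).sub continuous_const)
      (fun s => sub_ne' hw (habs s))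
  have c2 : Continuous (fun s => G (circleMap 0 R s)) := cont_comp hR hG
  have c3 : Continuous (fun s => A (circleMap 0 R s)) := cont_comp hR hA
  have key : (∫ s in (0:ℝ)..(2*Real.pi), ((Pk R w s : ℝ) : ℂ) * A (circleMap 0 R s))
      = (∫ s in (0:ℝ)..(2*Real.pi), (circleMap 0 R s / (circleMap 0 R s - w) * A (circleMap 0 R s)
          + G (circleMap 0 R s) - A (circleMap 0 R s))) := by
    apply intervalIntegral.integral_congr
    intro s _
    simp only [hGdef]
    rw [kernel_eq hR hw s]
    ring
  rw [key, intervalIntegral.integral_sub ((show Continuous fun s => circleMap 0 R s / (circleMap 0 R s - w) * A (circleMap 0 R s)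
      + G (circleMap 0 R s) from c1.add c2).intervalIntegrable _ _)
    (c3.intervalIntegrable _ _),
    intervalIntegral.integral_add (c1.intervalIntegrable _ _) (c2.intervalIntegrable _ _),
    e1, e2, e3]
  ring

lemma cont_Pk {R : ℝ} (hR : 0 < R) {w : ℂ} (hw : ‖w‖ < R) :
    Continuous (fun s => Pk R w s) := by
  have habs : ∀ s : ℝ, ‖(circleMap 0 R s)‖ = R := by
    intro s; simp [norm_circleMap_zero, abs_of_pos hR]
  apply Continuous.div continuous_const
  · exact (continuous_norm.comp ((continuous_circleMap 0 R).sub continuous_const)).pow 2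
  · intro s
    exact pow_ne_zero 2 (norm_ne_zero_iff.mpr (sub_ne' hw (habs s)))

lemma pointwise_ineq {R : ℝ} (hR : 0 < R) {A B : ℂ → ℂ} (hA : DiffContOnCl ℂ A (ball 0 R))
    (hB : DiffContOnCl ℂ B (ball 0 R)) {w : ℂ} (hw : ‖w‖ < R) :
    (2*Real.pi) * ‖(A w - (starRingEnd ℂ) (B w))‖
      ≤ ∫ s in (0:ℝ)..(2*Real.pi),
          Pk R w s * ‖(A (circleMap 0 R s) - (starRingEnd ℂ) (B (circleMap 0 R s)))‖ := by
  have eA := poissonRep hR hA hw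
  have eB := poissonRep hR hB hw
  have cP := cont_Pk hR hw
  have cPc : Continuous (fun s => ((Pk R w s : ℝ) : ℂ)) := Complex.continuous_ofReal.comp cP
  have cA := cont_comp hR hA
  have cB := cont_comp hR hB
  have cBc : Continuous fun s => (starRingEnd ℂ) (B (circleMap 0 R s)) :=
    Complex.continuous_conj.comp cB
  have conj_swap : ∀ (f : ℝ → ℂ) (a b : ℝ),
      (∫ s in a..b, (starRingEnd ℂ) (f s)) = (starRingEnd ℂ) (∫ s in a..b, f s) := by
    intro f a b
    rw [intervalIntegral.intervalIntegral_eq_integral_uIoc,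
      intervalIntegral.intervalIntegral_eq_integral_uIoc, integral_conj,
      real_smul, real_smul, map_mul, Complex.conj_ofReal]
  have eBc : ∫ s in (0:ℝ)..(2*Real.pi),
      ((Pk R w s : ℝ) : ℂ) * (starRingEnd ℂ) (B (circleMap 0 R s))
        = (2*Real.pi : ℝ) * (starRingEnd ℂ) (B w) := by
    have : ∀ s : ℝ, ((Pk R w s : ℝ) : ℂ) * (starRingEnd ℂ) (B (circleMap 0 R s))
        = (starRingEnd ℂ) (((Pk R w s : ℝ) : ℂ) * B (circleMap 0 R s)) := by
      intro s; rw [map_mul, Complex.conj_ofReal]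
    rw [intervalIntegral.integral_congr (fun s _ => this s)]
    rw [conj_swap, eB, map_mul, Complex.conj_ofReal]
  have key : ∫ s in (0:ℝ)..(2*Real.pi),
      ((Pk R w s : ℝ) : ℂ) * (A (circleMap 0 R s) - (starRingEnd ℂ) (B (circleMap 0 R s)))
        = (2*Real.pi : ℝ) * (A w - (starRingEnd ℂ) (B w)) := by
    have hsplit : ∀ s : ℝ, ((Pk R w s : ℝ) : ℂ) * (A (circleMap 0 R s) - (starRingEnd ℂ) (B (circleMap 0 R s)))
        = ((Pk R w s : ℝ) : ℂ) * A (circleMap 0 R s)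
          - ((Pk R w s : ℝ) : ℂ) * (starRingEnd ℂ) (B (circleMap 0 R s)) := fun s => by ring
    rw [intervalIntegral.integral_congr (fun s _ => hsplit s),
      intervalIntegral.integral_sub ((show Continuous fun s => ((Pk R w s : ℝ) : ℂ) * A (circleMap 0 R s) from cPc.mul cA).intervalIntegrable _ _)
        ((show Continuous fun s => ((Pk R w s : ℝ) : ℂ) * (starRingEnd ℂ) (B (circleMap 0 R s)) from cPc.mul cBc).intervalIntegrable _ _),
      eA, eBc]
    ring
  calc (2*Real.pi) * ‖(A w - (starRingEnd ℂ) (B w))‖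
      = ‖((2*Real.pi : ℝ) * (A w - (starRingEnd ℂ) (B w)))‖ := by
        rw [norm_mul, Complex.norm_real, Real.norm_eq_abs, _root_.abs_of_nonneg Real.two_pi_pos.le]
    _ = ‖(∫ s in (0:ℝ)..(2*Real.pi),
          ((Pk R w s : ℝ) : ℂ) * (A (circleMap 0 R s) - (starRingEnd ℂ) (B (circleMap 0 R s))))‖ := by
        rw [key]
    _ ≤ ∫ s in (0:ℝ)..(2*Real.pi),
          ‖((Pk R w s : ℝ) : ℂ) * (A (circleMap 0 R s) - (starRingEnd ℂ) (B (circleMap 0 R s)))‖ := by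
        exact intervalIntegral.norm_integral_le_integral_norm (by positivity)
    _ = ∫ s in (0:ℝ)..(2*Real.pi),
          Pk R w s * ‖(A (circleMap 0 R s) - (starRingEnd ℂ) (B (circleMap 0 R s)))‖ := by
        apply intervalIntegral.integral_congr
        intro s _
        simp only [norm_mul, Complex.norm_real, Real.norm_eq_abs,
          _root_.abs_of_nonneg (Pk_nonneg hw s)]

lemma swap_cont {Φ : ℝ → ℝ → ℝ} (hΦ : Continuous (Function.uncurry Φ)) {a b : ℝ} (hab : a ≤ b) :
    ∫ t in a..b, ∫ s in a..b, Φ t s = ∫ s in a..b, ∫ t in a..b, Φ t s := by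
  have hint : IntegrableOn (Function.uncurry Φ) (Set.Ioc a b ×ˢ Set.Ioc a b) := by
    apply (hΦ.continuousOn.integrableOn_compact (isCompact_Icc.prod isCompact_Icc)).mono_set
    exact Set.prod_mono Set.Ioc_subset_Icc_self Set.Ioc_subset_Icc_self
  have hint2 : Integrable (Function.uncurry Φ)
      ((volume.restrict (Set.Ioc a b)).prod (volume.restrict (Set.Ioc a b))) := by
    rwa [Measure.prod_restrict]
  have := MeasureTheory.integral_integral_swap hint2
  simpa only [intervalIntegral.integral_of_le hab] using this

lemma circle_abs_symm (R r t s : ℝ) :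
    ‖((R:ℂ) * Complex.exp ((s:ℂ)*Complex.I) - (r:ℂ) * Complex.exp ((t:ℂ)*Complex.I))‖
      = ‖((R:ℂ) * Complex.exp ((t:ℂ)*Complex.I) - (r:ℂ) * Complex.exp ((s:ℂ)*Complex.I))‖ := by
  have e1 : ∀ u : ℝ, (starRingEnd ℂ) (Complex.exp ((u:ℂ)*Complex.I))
      = (Complex.exp ((u:ℂ)*Complex.I))⁻¹ := by
    intro u
    rw [← Complex.exp_conj, ← Complex.exp_neg]
    congr 1
    simp [Complex.conj_I, Complex.conj_ofReal]
  have key : (R:ℂ) * Complex.exp ((s:ℂ)*Complex.I) - (r:ℂ) * Complex.exp ((t:ℂ)*Complex.I)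
      = Complex.exp ((s:ℂ)*Complex.I) * Complex.exp ((t:ℂ)*Complex.I)
        * (starRingEnd ℂ) ((R:ℂ) * Complex.exp ((t:ℂ)*Complex.I)
            - (r:ℂ) * Complex.exp ((s:ℂ)*Complex.I)) := by
    rw [map_sub, map_mul, map_mul, Complex.conj_ofReal, Complex.conj_ofReal, e1, e1]
    have h1 := Complex.exp_ne_zero ((s:ℂ)*Complex.I)
    have h2 := Complex.exp_ne_zero ((t:ℂ)*Complex.I)
    field_simp
  rw [key, norm_mul, norm_mul, Complex.norm_conj]
  simp [Complex.norm_exp]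

lemma Pk_total {R r : ℝ} (h0r : 0 ≤ r) (hrR : r < R) (s : ℝ) :
    ∫ t in (0:ℝ)..(2*Real.pi), Pk R ((r:ℂ) * Complex.exp ((t:ℂ)*Complex.I)) s = 2*Real.pi := by
  have hR : 0 < R := lt_of_le_of_lt h0r hrR
  have habsr : ∀ u : ℝ, ‖((r:ℂ) * Complex.exp ((u:ℂ)*Complex.I))‖ = r := by
    intro u
    rw [norm_mul, Complex.norm_real, Complex.norm_exp]
    simp [_root_.abs_of_nonneg h0r]
  have hcirc : ∀ u : ℝ, circleMap 0 R u = (R:ℂ) * Complex.exp ((u:ℂ)*Complex.I) := by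
    intro u; simp [circleMap]
  have hsymm : ∀ t : ℝ, Pk R ((r:ℂ) * Complex.exp ((t:ℂ)*Complex.I)) s
      = Pk R ((r:ℂ) * Complex.exp ((s:ℂ)*Complex.I)) t := by
    intro t
    simp only [Pk]
    rw [habsr, habsr, hcirc, hcirc, circle_abs_symm]
  rw [intervalIntegral.integral_congr (fun t _ => hsymm t)]
  -- now apply poissonRep with A = 1
  have hA : DiffContOnCl ℂ (fun _ : ℂ => (1:ℂ)) (ball (0:ℂ) R) :=
    ⟨differentiableOn_const _, continuousOn_const⟩
  have hw : ‖((r:ℂ) * Complex.exp ((s:ℂ)*Complex.I))‖ < R := by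
    rw [habsr]; exact hrR
  have := poissonRep hR (A := fun _ : ℂ => (1:ℂ)) hA hw
  simp only [mul_one] at this
  have hre : ((∫ t in (0:ℝ)..(2*Real.pi), Pk R ((r:ℂ) * Complex.exp ((s:ℂ)*Complex.I)) t : ℝ) : ℂ)
      = ((2*Real.pi : ℝ) : ℂ) := by
    rw [← this, intervalIntegral.integral_ofReal]
  exact_mod_cast hre

lemma circle_means_mono {R r : ℝ} (h0r : 0 ≤ r) (hrR : r < R)
    {A B : ℂ → ℂ} (hA : DiffContOnCl ℂ A (ball 0 R)) (hB : DiffContOnCl ℂ B (ball 0 R)) :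
    (∫ t in (0:ℝ)..(2*Real.pi), ‖(A ((r:ℂ)*Complex.exp ((t:ℂ)*Complex.I))
        - (starRingEnd ℂ) (B ((r:ℂ)*Complex.exp ((t:ℂ)*Complex.I))))‖)
      ≤ ∫ s in (0:ℝ)..(2*Real.pi), ‖(A ((R:ℂ)*Complex.exp ((s:ℂ)*Complex.I))
        - (starRingEnd ℂ) (B ((R:ℂ)*Complex.exp ((s:ℂ)*Complex.I))))‖ := by
  have hR : 0 < R := lt_of_le_of_lt h0r hrR
  have hcirc : ∀ u : ℝ, circleMap 0 R u = (R:ℂ) * Complex.exp ((u:ℂ)*Complex.I) := by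
    intro u; simp [circleMap]
  have habsr : ∀ u : ℝ, ‖((r:ℂ) * Complex.exp ((u:ℂ)*Complex.I))‖ = r := by
    intro u
    rw [norm_mul, Complex.norm_real, Complex.norm_exp]
    simp [_root_.abs_of_nonneg h0r]
  have habsR : ∀ u : ℝ, ‖(circleMap 0 R u)‖ = R := by
    intro u; simp [norm_circleMap_zero, abs_of_pos hR]
  set FF : ℝ → ℝ := fun s =>
    ‖(A (circleMap 0 R s) - (starRingEnd ℂ) (B (circleMap 0 R s)))‖ with hFF
  have cFF : Continuous FF := continuous_norm.comp
    ((cont_comp hR hA).sub (Complex.continuous_conj.comp (cont_comp hR hB)))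
  have cw : Continuous fun t : ℝ => (r:ℂ) * Complex.exp ((t:ℂ)*Complex.I) :=
    continuous_const.mul (Complex.continuous_exp.comp (Complex.continuous_ofReal.mul continuous_const))
  set Φ : ℝ → ℝ → ℝ := fun t s => Pk R ((r:ℂ)*Complex.exp ((t:ℂ)*Complex.I)) s * FF s with hΦ
  have cΦ : Continuous (Function.uncurry Φ) := by
    apply Continuous.mul _ (cFF.comp continuous_snd)
    apply Continuous.div
    · exact continuous_const.sub ((continuous_norm.comp (cw.comp continuous_fst)).pow 2)
    · exact (continuous_norm.comp
        (((continuous_circleMap 0 R).comp continuous_snd).sub (cw.comp continuous_fst))).pow 2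
    · intro p
      refine pow_ne_zero 2 (norm_ne_zero_iff.mpr (sub_ne' ?_ (habsR p.2)))
      rw [habsr]; exact hrR
  -- continuity of both circle restrictions of A, B at radius r
  have hAc : ContinuousOn A (closedBall (0:ℂ) R) := by
    have := hA.continuousOn; rwa [closure_ball 0 hR.ne'] at this
  have hBc : ContinuousOn B (closedBall (0:ℂ) R) := by
    have := hB.continuousOn; rwa [closure_ball 0 hR.ne'] at this
  have hmem : ∀ t : ℝ, (r:ℂ)*Complex.exp ((t:ℂ)*Complex.I) ∈ closedBall (0:ℂ) R := by
    intro t; simp only [Metric.mem_closedBall, Complex.dist_eq, sub_zero]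
    rw [habsr]; exact hrR.le
  have cFr : Continuous fun t : ℝ => ‖(A ((r:ℂ)*Complex.exp ((t:ℂ)*Complex.I))
      - (starRingEnd ℂ) (B ((r:ℂ)*Complex.exp ((t:ℂ)*Complex.I))))‖ := by
    apply continuous_norm.comp
    exact (hAc.comp_continuous cw hmem).sub
      (Complex.continuous_conj.comp (hBc.comp_continuous cw hmem))
  have cInner : Continuous fun t : ℝ => ∫ s in (0:ℝ)..(2*Real.pi), Φ t s :=
    continuous_parametric_intervalIntegral_of_continuous' cΦ _ _
  have key : (2*Real.pi) * (∫ t in (0:ℝ)..(2*Real.pi),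
      ‖(A ((r:ℂ)*Complex.exp ((t:ℂ)*Complex.I))
        - (starRingEnd ℂ) (B ((r:ℂ)*Complex.exp ((t:ℂ)*Complex.I))))‖)
      ≤ (2*Real.pi) * ∫ s in (0:ℝ)..(2*Real.pi), ‖(A ((R:ℂ)*Complex.exp ((s:ℂ)*Complex.I))
        - (starRingEnd ℂ) (B ((R:ℂ)*Complex.exp ((s:ℂ)*Complex.I))))‖ := by
    calc (2*Real.pi) * (∫ t in (0:ℝ)..(2*Real.pi),
        ‖(A ((r:ℂ)*Complex.exp ((t:ℂ)*Complex.I))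
          - (starRingEnd ℂ) (B ((r:ℂ)*Complex.exp ((t:ℂ)*Complex.I))))‖)
        = ∫ t in (0:ℝ)..(2*Real.pi), (2*Real.pi) *
            ‖(A ((r:ℂ)*Complex.exp ((t:ℂ)*Complex.I))
              - (starRingEnd ℂ) (B ((r:ℂ)*Complex.exp ((t:ℂ)*Complex.I))))‖ := by
          rw [intervalIntegral.integral_const_mul]
      _ ≤ ∫ t in (0:ℝ)..(2*Real.pi), (∫ s in (0:ℝ)..(2*Real.pi), Φ t s) := by
          apply intervalIntegral.integral_mono_on Real.two_pi_pos.le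
            ((continuous_const.mul cFr).intervalIntegrable _ _)
            (cInner.intervalIntegrable _ _)
          intro t _
          have hw : ‖((r:ℂ)*Complex.exp ((t:ℂ)*Complex.I))‖ < R := by
            rw [habsr]; exact hrR
          exact pointwise_ineq hR hA hB hw
      _ = ∫ s in (0:ℝ)..(2*Real.pi), (∫ t in (0:ℝ)..(2*Real.pi), Φ t s) :=
          swap_cont cΦ Real.two_pi_pos.le
      _ = ∫ s in (0:ℝ)..(2*Real.pi), (2*Real.pi) * FF s := by
          apply intervalIntegral.integral_congr
          intro s _
          simp only [hΦ]
          rw [intervalIntegral.integral_mul_const, Pk_total h0r hrR s]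
      _ = (2*Real.pi) * ∫ s in (0:ℝ)..(2*Real.pi), FF s := by
          rw [intervalIntegral.integral_const_mul]
      _ = (2*Real.pi) * ∫ s in (0:ℝ)..(2*Real.pi),
            ‖(A ((R:ℂ)*Complex.exp ((s:ℂ)*Complex.I))
              - (starRingEnd ℂ) (B ((R:ℂ)*Complex.exp ((s:ℂ)*Complex.I))))‖ := by
          congr 1
          apply intervalIntegral.integral_congr
          intro s _
          simp only [hFF, hcirc]
  exact le_of_mul_le_mul_left key Real.two_pi_pos

/-- For a harmonic mapping `f = h + conj g` on the unit disk with `h, g` analytic, the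
length `ℓ(γ_r) = r ∫₀^{2π} |h'(re^{it}) - e^{-2it} conj (g'(re^{it}))| dt` of the image of
the circle of radius `r` is nondecreasing in `r` on `[0,1)`. -/
theorem length_image_circle_monotone (h g : ℂ → ℂ)
    (hh : DifferentiableOn ℂ h (Metric.ball 0 1))
    (hg : DifferentiableOn ℂ g (Metric.ball 0 1)) :
    MonotoneOn (fun r : ℝ =>
      r * ∫ t in (0:ℝ)..(2 * Real.pi),
        ‖(deriv h ((r : ℂ) * Complex.exp ((t : ℂ) * Complex.I)) -
          Complex.exp (((-2 * t : ℝ) : ℂ) * Complex.I) *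
            (starRingEnd ℂ) (deriv g ((r : ℂ) * Complex.exp ((t : ℂ) * Complex.I))))‖)
      (Set.Ico 0 1) := by
  intro r1 hr1 r2 hr2 hle
  rcases hle.lt_or_eq with hlt | heq
  swap
  · rw [heq]
  have hr10 : (0:ℝ) ≤ r1 := hr1.1
  have hr21 : r2 < 1 := hr2.2
  have hR : 0 < r2 := lt_of_le_of_lt hr10 hlt
  set A : ℂ → ℂ := fun z => z * deriv h z with hAdef
  set B : ℂ → ℂ := fun z => z * deriv g z with hBdef
  have hA1 : DifferentiableOn ℂ A (ball 0 1) :=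
    differentiableOn_id.mul (hh.analyticOnNhd isOpen_ball).deriv.differentiableOn
  have hB1 : DifferentiableOn ℂ B (ball 0 1) :=
    differentiableOn_id.mul (hg.analyticOnNhd isOpen_ball).deriv.differentiableOn
  have hsub : closedBall (0:ℂ) r2 ⊆ ball 0 1 := closedBall_subset_ball hr21
  have hA : DiffContOnCl ℂ A (ball 0 r2) := by
    refine ⟨hA1.mono (ball_subset_ball hr21.le), ?_⟩
    rw [closure_ball (0:ℂ) hR.ne']
    exact hA1.continuousOn.mono hsub
  have hB : DiffContOnCl ℂ B (ball 0 r2) := by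
    refine ⟨hB1.mono (ball_subset_ball hr21.le), ?_⟩
    rw [closure_ball (0:ℂ) hR.ne']
    exact hB1.continuousOn.mono hsub
  have key := circle_means_mono hr10 hlt hA hB
  have htrans : ∀ r : ℝ, 0 ≤ r →
      (r * ∫ t in (0:ℝ)..(2 * Real.pi),
        ‖(deriv h ((r : ℂ) * Complex.exp ((t : ℂ) * Complex.I)) -
          Complex.exp (((-2 * t : ℝ) : ℂ) * Complex.I) *
            (starRingEnd ℂ) (deriv g ((r : ℂ) * Complex.exp ((t : ℂ) * Complex.I))))‖)
      = ∫ t in (0:ℝ)..(2 * Real.pi),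
          ‖(A ((r:ℂ)*Complex.exp ((t:ℂ)*Complex.I))
            - (starRingEnd ℂ) (B ((r:ℂ)*Complex.exp ((t:ℂ)*Complex.I))))‖ := by
    intro r hr
    rw [← intervalIntegral.integral_const_mul]
    apply intervalIntegral.integral_congr
    intro t _
    set z : ℂ := (r:ℂ) * Complex.exp ((t:ℂ)*Complex.I) with hzdef
    have hmul : Complex.exp ((t:ℂ)*Complex.I) * Complex.exp (((-2 * t : ℝ):ℂ)*Complex.I)
        = Complex.exp (-((t:ℂ)*Complex.I)) := by
      rw [← Complex.exp_add]; congr 1; push_cast; ring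
    have hconjz : (starRingEnd ℂ) z = (r:ℂ) * Complex.exp (-((t:ℂ)*Complex.I)) := by
      rw [hzdef, map_mul, Complex.conj_ofReal, ← Complex.exp_conj]
      congr 2
      simp [Complex.conj_I, Complex.conj_ofReal]
    have hz : A z - (starRingEnd ℂ) (B z)
        = z * (deriv h z - Complex.exp (((-2 * t : ℝ):ℂ)*Complex.I) * (starRingEnd ℂ) (deriv g z)) := by
      simp only [hAdef, hBdef, map_mul]
      rw [hconjz, hzdef]
      linear_combination ((r:ℂ) * (starRingEnd ℂ)
        (deriv g ((r:ℂ) * Complex.exp ((t:ℂ)*Complex.I)))) * hmul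
    show r * ‖_‖ = ‖_‖
    rw [hz, norm_mul]
    congr 1
    rw [hzdef, norm_mul, Complex.norm_real, Complex.norm_exp]
    simp [_root_.abs_of_nonneg hr]
  show (r1 * ∫ t in (0:ℝ)..(2 * Real.pi), _) ≤ (r2 * ∫ t in (0:ℝ)..(2 * Real.pi), _)
  rw [htrans r1 hr10, htrans r2 hR.le]
  exact key
end

section
/- If f is a bounded harmonic mapping on the unit disk with sup_{z∈𝔻}|f(z)| = N, then for every z ∈ 𝔻, ‖D_f(z)‖ = |f_z(z)| + |f_z̄(z)| ≤ 4N / (π(1 − |z|²)). -/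
open Complex Metric Set

lemma aux_normSq_sin (x y : ℝ) :
    normSq (Complex.sin (x + y * I)) = Real.sin x ^ 2 + Real.sinh y ^ 2 := by
  have h : Complex.sin (x + y * I)
      = (Real.sin x * Real.cosh y : ℝ) + (Real.cos x * Real.sinh y : ℝ) * I := by
    rw [Complex.sin_add, Complex.cos_mul_I, Complex.sin_mul_I]
    push_cast; ring
  rw [h, normSq_add_mul_I]
  nlinarith [Real.sin_sq_add_cos_sq x, Real.cosh_sq y]

lemma aux_normSq_cos (x y : ℝ) :
    normSq (Complex.cos (x + y * I)) = Real.cos x ^ 2 + Real.sinh y ^ 2 := by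
  have h : Complex.cos (x + y * I)
      = (Real.cos x * Real.cosh y : ℝ) + (-(Real.sin x * Real.sinh y) : ℝ) * I := by
    rw [Complex.cos_add, Complex.cos_mul_I, Complex.sin_mul_I]
    push_cast; ring
  rw [h, normSq_add_mul_I]
  nlinarith [Real.sin_sq_add_cos_sq x, Real.cosh_sq y]

lemma aux_normSq_cos' (ξ : ℂ) : normSq (Complex.cos ξ) = Real.cos ξ.re ^ 2 + Real.sinh ξ.im ^ 2 := by
  conv_lhs => rw [← Complex.re_add_im ξ]
  exact aux_normSq_cos ξ.re ξ.im
lemma aux_normSq_sin' (ξ : ℂ) : normSq (Complex.sin ξ) = Real.sin ξ.re ^ 2 + Real.sinh ξ.im ^ 2 := by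
  conv_lhs => rw [← Complex.re_add_im ξ]
  exact aux_normSq_sin ξ.re ξ.im

lemma aux_cos_ne_zero {ξ : ℂ} (hξ : |ξ.re| < Real.pi / 4) : Complex.cos ξ ≠ 0 := by
  have h1 : Real.cos ξ.re > 0 := by
    apply Real.cos_pos_of_mem_Ioo
    constructor <;> [linarith [abs_lt.1 hξ |>.1, Real.pi_pos]; linarith [abs_lt.1 hξ |>.2, Real.pi_pos]]
  intro h
  have := aux_normSq_cos' ξ
  rw [h, map_zero] at this
  nlinarith [sq_nonneg (Real.sinh ξ.im)]

lemma aux_sq_lt {ξ : ℂ} (hξ : |ξ.re| < Real.pi / 4) :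
    Real.sin ξ.re ^ 2 < Real.cos ξ.re ^ 2 := by
  have h2 : Real.cos (2 * ξ.re) > 0 := by
    apply Real.cos_pos_of_mem_Ioo
    have := abs_lt.1 hξ
    constructor <;> [linarith [this.1]; linarith [this.2]]
  nlinarith [Real.cos_two_mul' ξ.re]

lemma aux_tan_lt_one {ξ : ℂ} (hξ : |ξ.re| < Real.pi / 4) :
    ‖Complex.tan ξ‖ < 1 := by
  have hc := aux_cos_ne_zero hξ
  rw [Complex.tan_eq_sin_div_cos, norm_div, div_lt_one (by simpa using hc : 0 < ‖Complex.cos ξ‖)]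
  have h1 := aux_normSq_sin' ξ
  have h2 := aux_normSq_cos' ξ
  have := aux_sq_lt hξ
  have : normSq (Complex.sin ξ) < normSq (Complex.cos ξ) := by rw [h1, h2]; linarith
  have := Real.sqrt_lt_sqrt (normSq_nonneg _) this
  simpa [Complex.norm_def] using this

noncomputable def mob (a w : ℂ) : ℂ := (a - w) / (1 - (starRingEnd ℂ) a * w)

lemma mob_denom_ne {a w : ℂ} (ha : ‖a‖ < 1) (hw : ‖w‖ < 1) :
    (1 : ℂ) - (starRingEnd ℂ) a * w ≠ 0 := by
  intro h
  have h2 : (1 : ℂ) = (starRingEnd ℂ) a * w := by linear_combination h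
  have : ‖(starRingEnd ℂ) a * w‖ < 1 := by
    rw [norm_mul, Complex.norm_conj]
    nlinarith [norm_nonneg a, norm_nonneg w]
  rw [← h2] at this; simp at this

lemma mob_key (a w : ℂ) :
    normSq (1 - (starRingEnd ℂ) a * w) - normSq (a - w) = (1 - normSq a) * (1 - normSq w) := by
  simp only [Complex.normSq_apply, Complex.sub_re, Complex.sub_im, Complex.mul_re, Complex.mul_im,
    Complex.conj_re, Complex.conj_im, Complex.one_re, Complex.one_im]
  ring

lemma mob_mem {a w : ℂ} (ha : ‖a‖ < 1) (hw : ‖w‖ < 1) :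
    ‖mob a w‖ < 1 := by
  have hne := mob_denom_ne ha hw
  have hpos : 0 < ‖1 - (starRingEnd ℂ) a * w‖ := by simpa using hne
  rw [mob, norm_div, div_lt_one hpos]
  have h1 : normSq (a - w) < normSq (1 - (starRingEnd ℂ) a * w) := by
    have := mob_key a w
    have ha2 : normSq a < 1 := by rw [← Complex.sq_norm] at *; nlinarith [norm_nonneg a]
    have hw2 : normSq w < 1 := by rw [← Complex.sq_norm] at *; nlinarith [norm_nonneg w]
    nlinarith
  have := Real.sqrt_lt_sqrt (normSq_nonneg _) h1
  simpa [Complex.norm_def] using this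

lemma mob_hasDerivAt {a w : ℂ} (hden : (1:ℂ) - (starRingEnd ℂ) a * w ≠ 0) :
    HasDerivAt (mob a) (((normSq a : ℂ) - 1) / (1 - (starRingEnd ℂ) a * w)^2) w := by
  have h1 : HasDerivAt (fun w : ℂ => a - w) (-1) w := (hasDerivAt_id w).const_sub a
  have h2 : HasDerivAt (fun w : ℂ => 1 - (starRingEnd ℂ) a * w) (-((starRingEnd ℂ) a)) w := by
    simpa using ((hasDerivAt_id w).const_mul ((starRingEnd ℂ) a)).const_sub 1
  have h3 := h2.inv hden
  have h4 := h1.mul h3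
  have heq : (-1) * (1 - (starRingEnd ℂ) a * w)⁻¹ +
      (a - w) * (-(-(starRingEnd ℂ) a) / (1 - (starRingEnd ℂ) a * w) ^ 2)
      = ((normSq a : ℂ) - 1) / (1 - (starRingEnd ℂ) a * w)^2 := by
    rw [← Complex.mul_conj]
    field_simp
    ring
  simp only [Pi.inv_apply] at h4
  rw [heq] at h4
  have hfun : mob a = fun y => (a - y) * (1 - (starRingEnd ℂ) a * y)⁻¹ := by
    funext y; rw [mob, div_eq_mul_inv]
  rw [hfun]
  exact h4

lemma mob_zero (a : ℂ) : mob a 0 = a := by simp [mob]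
lemma mob_self (a : ℂ) : mob a a = 0 := by simp [mob]

lemma schwarz_pick {F : ℂ → ℂ} (hF : DifferentiableOn ℂ F (ball 0 1))
    (hmaps : MapsTo F (ball 0 1) (ball 0 1)) {z : ℂ} (hz : z ∈ ball (0:ℂ) 1) :
    ‖deriv F z‖ * (1 - ‖z‖ ^ 2) ≤ 1 - ‖F z‖ ^ 2 := by
  have hz1 : ‖z‖ < 1 := by simpa using hz
  set b := F z with hb
  have hb1 : ‖b‖ < 1 := by simpa using hmaps hz
  set G : ℂ → ℂ := fun w => mob b (F (mob z w)) with hG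
  have memball : ∀ u : ℂ, ‖u‖ < 1 → u ∈ ball (0:ℂ) 1 := by
    intro u hu; simpa using hu
  have hGmaps : MapsTo G (ball 0 1) (ball 0 1) := by
    intro w hw
    have hw1 : ‖w‖ < 1 := by simpa using hw
    exact memball _ (mob_mem hb1 (by simpa using hmaps (memball _ (mob_mem hz1 hw1))))
  have hG0 : G 0 = 0 := by rw [hG]; simp only [mob_zero, ← hb, mob_self]
  -- differentiability of G on the ball
  have hGdiff : DifferentiableOn ℂ G (ball 0 1) := by
    intro w hw
    have hw1 : ‖w‖ < 1 := by simpa using hw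
    have d1 : DifferentiableAt ℂ (mob z) w :=
      (mob_hasDerivAt (mob_denom_ne hz1 hw1)).differentiableAt
    have hFm : ‖F (mob z w)‖ < 1 := by
      simpa using hmaps (memball _ (mob_mem hz1 hw1))
    have d2 : DifferentiableAt ℂ F (mob z w) :=
      hF.differentiableAt (isOpen_ball.mem_nhds (memball _ (mob_mem hz1 hw1)))
    have d3 : DifferentiableAt ℂ (mob b) (F (mob z w)) :=
      (mob_hasDerivAt (mob_denom_ne hb1 hFm)).differentiableAt
    exact (d3.comp w (d2.comp w d1)).differentiableWithinAt
  -- derivative of G at 0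
  have h1 : HasDerivAt (mob z) ((normSq z : ℂ) - 1) 0 := by
    have := mob_hasDerivAt (a := z) (w := 0) (by simp)
    simpa using this
  have h2 : HasDerivAt F (deriv F z) z :=
    (hF.differentiableAt (isOpen_ball.mem_nhds hz)).hasDerivAt
  have hden_b : (1:ℂ) - (starRingEnd ℂ) b * b ≠ 0 := by
    rw [mul_comm, Complex.mul_conj]
    intro hc
    have : (normSq b : ℂ) = 1 := by linear_combination -hc
    have h2' : normSq b = 1 := by exact_mod_cast this
    rw [← Complex.sq_norm] at h2'
    nlinarith [norm_nonneg b]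
  have h3 : HasDerivAt (mob b) (((normSq b : ℂ) - 1) / (1 - (starRingEnd ℂ) b * b)^2) b :=
    mob_hasDerivAt hden_b
  have hcomp : HasDerivAt G
      ((((normSq b : ℂ) - 1) / (1 - (starRingEnd ℂ) b * b)^2) * (deriv F z * ((normSq z : ℂ) - 1))) 0 := by
    have h2' : HasDerivAt F (deriv F z) (mob z 0) := by rwa [mob_zero]
    have h4 := h2'.comp (0:ℂ) h1
    have h3' : HasDerivAt (mob b) (((normSq b : ℂ) - 1) / (1 - (starRingEnd ℂ) b * b)^2)
        ((F ∘ mob z) 0) := by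
      simpa [Function.comp, mob_zero, ← hb] using h3
    have h5 := h3'.comp (0:ℂ) h4
    exact h5
  have hle : ‖deriv G 0‖ ≤ 1 :=
    Complex.norm_deriv_le_one_of_mapsTo_ball hGdiff
      (by rw [hG0]; exact hGmaps.mono_right ball_subset_closedBall) one_pos
  rw [hcomp.deriv] at hle
  -- compute the absolute value
  have e1 : (1:ℂ) - (starRingEnd ℂ) b * b = ((1 - ‖b‖ ^ 2 : ℝ) : ℂ) := by
    rw [mul_comm, Complex.mul_conj, ← Complex.sq_norm]
    push_cast
    ring
  have habs : ‖(((normSq b : ℂ) - 1) / (1 - (starRingEnd ℂ) b * b)^2) * (deriv F z * ((normSq z : ℂ) - 1))‖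
      = ((1 - ‖b‖ ^ 2) / (1 - ‖b‖ ^ 2)^2) * (‖deriv F z‖ * (1 - ‖z‖ ^ 2)) := by
    rw [norm_mul, norm_mul, norm_div, norm_pow, e1]
    have e2 : (normSq b : ℂ) - 1 = ((‖b‖ ^ 2 - 1 : ℝ) : ℂ) := by
      push_cast [← Complex.sq_norm]; ring
    have e3 : (normSq z : ℂ) - 1 = ((‖z‖ ^ 2 - 1 : ℝ) : ℂ) := by
      push_cast [← Complex.sq_norm]; ring
    rw [e2, e3, Complex.norm_real, Complex.norm_real, Complex.norm_real, Real.norm_eq_abs, Real.norm_eq_abs,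
        Real.norm_eq_abs]
    have hb2 : ‖b‖ ^ 2 < 1 := by nlinarith [norm_nonneg b]
    have hz2 : ‖z‖ ^ 2 < 1 := by nlinarith [norm_nonneg z]
    rw [abs_of_pos (by linarith : (0:ℝ) < 1 - ‖b‖ ^ 2),
        abs_of_neg (by linarith : ‖b‖ ^ 2 - 1 < 0),
        abs_of_neg (by linarith : ‖z‖ ^ 2 - 1 < 0)]
    ring
  rw [habs] at hle
  have hb2 : (0:ℝ) < 1 - ‖b‖ ^ 2 := by nlinarith [norm_nonneg b]
  have : ((1 - ‖b‖ ^ 2) / (1 - ‖b‖ ^ 2)^2) = (1 - ‖b‖ ^ 2)⁻¹ := by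
    field_simp
  rw [this] at hle
  rw [inv_mul_le_iff₀ (by positivity), mul_one] at hle
  exact hle

lemma key_bound {φ : ℂ → ℂ} {M : ℝ} (hφ : DifferentiableOn ℂ φ (ball 0 1))
    (hbd : ∀ w ∈ ball (0:ℂ) 1, |(φ w).re| < M) {z : ℂ} (hz : z ∈ ball (0:ℂ) 1) :
    ‖deriv φ z‖ ≤ 4 * M / (Real.pi * (1 - ‖z‖ ^ 2)) := by
  have hM : 0 < M := lt_of_le_of_lt (abs_nonneg _) (hbd 0 (mem_ball_self one_pos))
  set c : ℝ := Real.pi / (4 * M) with hc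
  have hcpos : 0 < c := by rw [hc]; positivity
  set ψ : ℂ → ℂ := fun w => Complex.tan ((c:ℂ) * φ w) with hψ
  have hstrip : ∀ w ∈ ball (0:ℂ) 1, |((c:ℂ) * φ w).re| < Real.pi / 4 := by
    intro w hw
    have hre : ((c:ℂ) * φ w).re = c * (φ w).re := by
      simp [Complex.mul_re]
    rw [hre, abs_mul, abs_of_pos hcpos]
    calc c * |(φ w).re| < c * M := by nlinarith [hbd w hw]
      _ = Real.pi / 4 := by rw [hc]; field_simp
  have hcos : ∀ w ∈ ball (0:ℂ) 1, Complex.cos ((c:ℂ) * φ w) ≠ 0 :=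
    fun w hw => aux_cos_ne_zero (hstrip w hw)
  have hψdiff : DifferentiableOn ℂ ψ (ball 0 1) := by
    intro w hw
    have d1 : DifferentiableAt ℂ (fun w => (c:ℂ) * φ w) w :=
      (hφ.differentiableAt (isOpen_ball.mem_nhds hw)).const_mul _
    have d2 : DifferentiableAt ℂ Complex.tan ((c:ℂ) * φ w) :=
      Complex.differentiableAt_tan.2 (hcos w hw)
    exact (d2.comp w d1).differentiableWithinAt
  have hψmaps : MapsTo ψ (ball 0 1) (ball 0 1) := fun w hw => by
    simpa using aux_tan_lt_one (hstrip w hw)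
  set ξ : ℂ := (c:ℂ) * φ z with hξ
  have hd1 : HasDerivAt (fun w => (c:ℂ) * φ w) ((c:ℂ) * deriv φ z) z :=
    ((hφ.differentiableAt (isOpen_ball.mem_nhds hz)).hasDerivAt).const_mul _
  have hd2 : HasDerivAt Complex.tan (1 / Complex.cos ξ ^ 2) ξ :=
    Complex.hasDerivAt_tan (hcos z hz)
  have hdψ : HasDerivAt ψ (1 / Complex.cos ξ ^ 2 * ((c:ℂ) * deriv φ z)) z := by
    have := hd2.comp z hd1; exact this
  have hsp := schwarz_pick hψdiff hψmaps hz
  have hcosne := hcos z hz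
  have hNcos : 0 < normSq (Complex.cos ξ) := Complex.normSq_pos.2 hcosne
  have habs : ‖deriv ψ z‖
      = c * ‖deriv φ z‖ / normSq (Complex.cos ξ) := by
    rw [hdψ.deriv, norm_mul, norm_div, norm_one, norm_pow, norm_mul, Complex.norm_real,
      Real.norm_eq_abs, abs_of_pos hcpos, Complex.sq_norm]
    ring
  have htan : ‖Complex.tan ξ‖ ^ 2
      = normSq (Complex.sin ξ) / normSq (Complex.cos ξ) := by
    rw [Complex.tan_eq_sin_div_cos, norm_div, div_pow, Complex.sq_norm, Complex.sq_norm]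
  have hψz : ψ z = Complex.tan ξ := rfl
  rw [habs, hψz] at hsp
  have key : (1 - ‖Complex.tan ξ‖ ^ 2) * normSq (Complex.cos ξ) ≤ 1 := by
    rw [htan]
    have heq : (1 - normSq (Complex.sin ξ) / normSq (Complex.cos ξ)) * normSq (Complex.cos ξ)
        = normSq (Complex.cos ξ) - normSq (Complex.sin ξ) := by field_simp
    rw [heq, aux_normSq_sin' ξ, aux_normSq_cos' ξ]
    nlinarith [Real.sin_sq_add_cos_sq ξ.re, sq_nonneg (Real.sin ξ.re)]
  set A := ‖deriv φ z‖ with hA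
  set D := 1 - ‖z‖ ^ 2 with hD
  have hz1 : ‖z‖ < 1 := by simpa using hz
  have hDpos : 0 < D := by rw [hD]; nlinarith [norm_nonneg z]
  have h1 : c * A * D ≤ 1 := by
    have h2 := mul_le_mul_of_nonneg_right hsp (le_of_lt hNcos)
    calc c * A * D = c * A / normSq (Complex.cos ξ) * D * normSq (Complex.cos ξ) := by
          field_simp
      _ ≤ (1 - ‖Complex.tan ξ‖ ^ 2) * normSq (Complex.cos ξ) := h2
      _ ≤ 1 := key
  rw [le_div_iff₀ (by positivity : 0 < Real.pi * D)]
  have h3 : Real.pi * (A * D) ≤ 4 * M := by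
    have h4 := mul_le_mul_of_nonneg_left h1 (le_of_lt (by positivity : (0:ℝ) < 4 * M))
    rw [hc] at h4
    have h5 : 4 * M * (Real.pi / (4 * M) * A * D) = Real.pi * (A * D) := by
      field_simp
    rw [h5] at h4
    linarith
  linarith [h3]

/-- Colonna's gradient estimate: if `f = h + conj g` is a bounded harmonic mapping on the
unit disk with `sup_{z∈𝔻}|f(z)| = N`, then for every `z ∈ 𝔻`,
`‖D_f(z)‖ = |f_z(z)| + |f_z̄(z)| ≤ 4N/(π(1 − |z|²))`. -/
theorem colonna_gradient_estimate (h g f : ℂ → ℂ) (N : ℝ)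
    (hh : DifferentiableOn ℂ h (Metric.ball 0 1))
    (hg : DifferentiableOn ℂ g (Metric.ball 0 1))
    (hf : ∀ z ∈ Metric.ball (0:ℂ) 1, f z = h z + (starRingEnd ℂ) (g z))
    (hN : IsLUB ((fun z => ‖f z‖) '' Metric.ball 0 1) N) :
    ∀ z ∈ Metric.ball (0:ℂ) 1,
      ‖deriv h z‖ + ‖deriv g z‖ ≤
        4 * N / (Real.pi * (1 - ‖z‖ ^ 2)) := by
  intro z hz
  have hz1 : ‖z‖ < 1 := by simpa using hz
  have hDpos : 0 < 1 - ‖z‖ ^ 2 := by nlinarith [norm_nonneg z]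
  have hfb : ∀ w ∈ ball (0:ℂ) 1, ‖f w‖ ≤ N := fun w hw => hN.1 ⟨w, hw, rfl⟩
  set a := deriv h z with ha
  set b := deriv g z with hb
  have main : ∀ ε : ℝ, 0 < ε →
      ‖a‖ + ‖b‖
        ≤ 4 * (N + ε) / (Real.pi * (1 - ‖z‖ ^ 2)) := by
    intro ε hε
    set θ : ℝ := (b.arg - a.arg) / 2 with hθ
    set γ : ℝ := (a.arg + b.arg) / 2 with hγ
    set φ : ℂ → ℂ := fun w => Complex.exp (θ * I) * h w + Complex.exp (-(θ * I)) * g w with hφ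
    have hφdiff : DifferentiableOn ℂ φ (ball 0 1) :=
      ((differentiableOn_const _).mul hh).add ((differentiableOn_const _).mul hg)
    have hrebd : ∀ w ∈ ball (0:ℂ) 1, |(φ w).re| < N + ε := by
      intro w hw
      have hconj : (starRingEnd ℂ) (Complex.exp (↑θ*I) * (starRingEnd ℂ) (g w))
          = Complex.exp (-(↑θ*I)) * g w := by
        rw [map_mul, RingHomCompTriple.comp_apply, RingHom.id_apply]
        congr 1
        rw [← Complex.exp_conj]
        congr 1
        simp [Complex.conj_ofReal]
      have h2 : (φ w).re = (Complex.exp (↑θ*I) * f w).re := by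
        rw [hf w hw, hφ]
        simp only [mul_add, Complex.add_re]
        congr 1
        rw [← hconj, Complex.conj_re]
      rw [h2]
      calc |(Complex.exp (↑θ*I) * f w).re| ≤ ‖Complex.exp (↑θ*I) * f w‖ :=
            Complex.abs_re_le_norm _
        _ = ‖f w‖ := by rw [norm_mul, Complex.norm_exp_ofReal_mul_I, one_mul]
        _ ≤ N := hfb w hw
        _ < N + ε := by linarith
    have hda : HasDerivAt h a z := (hh.differentiableAt (isOpen_ball.mem_nhds hz)).hasDerivAt
    have hdb : HasDerivAt g b z := (hg.differentiableAt (isOpen_ball.mem_nhds hz)).hasDerivAt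
    have hdφ : HasDerivAt φ (Complex.exp (↑θ*I) * a + Complex.exp (-(↑θ*I)) * b) z :=
      (hda.const_mul _).add (hdb.const_mul _)
    have hθγ : θ + a.arg = γ := by rw [hθ, hγ]; ring
    have hθγ' : b.arg - θ = γ := by rw [hθ, hγ]; ring
    have e1 : Complex.exp (↑θ*I) * a = (‖a‖ : ℂ) * Complex.exp (↑γ*I) := by
      conv_lhs => rw [← Complex.norm_mul_exp_arg_mul_I a]
      rw [← hθγ]
      push_cast
      rw [add_mul, Complex.exp_add]
      ring
    have e2 : Complex.exp (-(↑θ*I)) * b = (‖b‖ : ℂ) * Complex.exp (↑γ*I) := by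
      conv_lhs => rw [← Complex.norm_mul_exp_arg_mul_I b]
      rw [← hθγ']
      push_cast
      rw [sub_mul, sub_eq_add_neg, Complex.exp_add]
      ring
    have hcombo : ‖Complex.exp (↑θ*I) * a + Complex.exp (-(↑θ*I)) * b‖
        = ‖a‖ + ‖b‖ := by
      rw [e1, e2, ← add_mul, norm_mul, Complex.norm_exp_ofReal_mul_I, mul_one,
        ← Complex.ofReal_add, Complex.norm_real, Real.norm_eq_abs]
      exact abs_of_nonneg (by positivity)
    have hkb := key_bound hφdiff hrebd hz
    calc ‖a‖ + ‖b‖ = ‖deriv φ z‖ := by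
          rw [hdφ.deriv, hcombo]
      _ ≤ 4 * (N + ε) / (Real.pi * (1 - ‖z‖ ^ 2)) := hkb
  refine le_of_forall_pos_le_add ?_
  intro δ hδ
  have hε : 0 < δ * (Real.pi * (1 - ‖z‖ ^ 2)) / 4 := by positivity
  have hm := main _ hε
  have heq : 4 * (N + δ * (Real.pi * (1 - ‖z‖ ^ 2)) / 4)
        / (Real.pi * (1 - ‖z‖ ^ 2))
      = 4 * N / (Real.pi * (1 - ‖z‖ ^ 2)) + δ := by
    field_simp
  rw [heq] at hm
  exact hm
end

section
/- Let f be a K-quasiconformal harmonic mapping of the unit disk onto a bounded domain D. Then for all r ∈ (0,1) and all θ ∈ [0,2π], the radial length satisfies ℓ*_f(θ, r) ≤ 8K · sup_{z∈𝔻}|f(z)| · log((1+r)/(1−r)). -/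
open MeasureTheory

open Complex Metric in
lemma aux_cos_ne_zero_s16 {ζ : ℂ} (hre : |ζ.re| ≤ Real.pi/4) : Complex.cos ζ ≠ 0 := by
  intro hc
  obtain ⟨k, hk⟩ := Complex.cos_eq_zero_iff.1 hc
  have hre' : ζ.re = (2 * (k:ℝ) + 1) * Real.pi / 2 := by
    rw [hk]; push_cast; simp
  have hk1 : (1:ℝ) ≤ |2 * (k:ℝ) + 1| := by
    rcases le_or_gt 0 k with hk0 | hk0
    · have h0 : (0:ℝ) ≤ (k:ℝ) := by exact_mod_cast hk0
      rw [_root_.abs_of_nonneg (by linarith)]; linarith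
    · have h1 : k ≤ -1 := by omega
      have h0 : (k:ℝ) ≤ -1 := by exact_mod_cast h1
      rw [_root_.abs_of_nonpos (by linarith)]; linarith
  have hπ : (0:ℝ) < Real.pi := Real.pi_pos
  have habs : |ζ.re| = |2 * (k:ℝ) + 1| * (Real.pi / 2) := by
    rw [hre', abs_div, abs_mul, _root_.abs_of_nonneg hπ.le]
    norm_num [mul_div_assoc]
  nlinarith [habs ▸ hre]


open Complex Metric in
lemma aux_abs_tan_le_one {ζ : ℂ} (hre : |ζ.re| ≤ Real.pi/4) :
    ‖Complex.tan ζ‖ ≤ 1 := by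
  have hcos := aux_cos_ne_zero_s16 hre
  have hs : Complex.normSq (Complex.sin ζ) =
      (Real.sin ζ.re * Real.cosh ζ.im)^2 + (Real.cos ζ.re * Real.sinh ζ.im)^2 := by
    rw [Complex.sin_eq, ← Complex.ofReal_sin, ← Complex.ofReal_cosh, ← Complex.ofReal_cos,
      ← Complex.ofReal_sinh, ← Complex.ofReal_mul, ← Complex.ofReal_mul,
      Complex.normSq_add_mul_I]
  have hc : Complex.normSq (Complex.cos ζ) =
      (Real.cos ζ.re * Real.cosh ζ.im)^2 + (Real.sin ζ.re * Real.sinh ζ.im)^2 := by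
    have : Complex.cos ζ = ((Real.cos ζ.re * Real.cosh ζ.im : ℝ) : ℂ) +
        ((-(Real.sin ζ.re * Real.sinh ζ.im) : ℝ) : ℂ) * Complex.I := by
      rw [Complex.cos_eq, ← Complex.ofReal_sin, ← Complex.ofReal_cosh, ← Complex.ofReal_cos,
        ← Complex.ofReal_sinh]
      push_cast; ring
    rw [this, Complex.normSq_add_mul_I, neg_sq]
  have hcos2 : (0:ℝ) ≤ Real.cos ζ.re ^ 2 - Real.sin ζ.re ^ 2 := by
    have h2 : Real.cos ζ.re ^ 2 - Real.sin ζ.re ^ 2 = Real.cos (2 * ζ.re) := by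
      rw [Real.cos_two_mul]; nlinarith [Real.sin_sq_add_cos_sq ζ.re]
    rw [h2]
    apply Real.cos_nonneg_of_mem_Icc
    have := abs_le.1 hre
    constructor <;> [linarith [this.1]; linarith [this.2]]
  have hch : Real.cosh ζ.im ^ 2 - Real.sinh ζ.im ^ 2 = 1 := Real.cosh_sq_sub_sinh_sq ζ.im
  have hle : Complex.normSq (Complex.sin ζ) ≤ Complex.normSq (Complex.cos ζ) := by
    rw [hs, hc]; nlinarith
  have habs : ‖Complex.sin ζ‖ ≤ ‖Complex.cos ζ‖ := by
    rw [Complex.norm_def, Complex.norm_def]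
    exact Real.sqrt_le_sqrt hle
  rw [Complex.tan_eq_sin_div_cos, norm_div, div_le_one (norm_pos_iff.2 hcos)]
  exact habs

open Complex Metric in
lemma deriv_bound_of_re_bounded (Φ : ℂ → ℂ) (N : ℝ) (hN : 0 < N)
    (hΦ : DifferentiableOn ℂ Φ (Metric.ball 0 1))
    (hb : ∀ w ∈ Metric.ball (0:ℂ) 1, |(Φ w).re| ≤ N)
    (z : ℂ) (hz : z ∈ Metric.ball (0:ℂ) 1) :
    ‖deriv Φ z‖ ≤ 12 * N / (Real.pi * (1 - ‖z‖)) := by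
  have hπ : (0:ℝ) < Real.pi := Real.pi_pos
  set c : ℝ := Real.pi / (4 * N) with hc
  have hcpos : 0 < c := by positivity
  have hR : 0 < 1 - ‖z‖ := by
    rw [mem_ball, dist_zero_right] at hz; simpa using sub_pos.2 hz
  have hsub : Metric.ball z (1 - ‖z‖) ⊆ Metric.ball (0:ℂ) 1 := by
    apply Metric.ball_subset_ball'
    rw [dist_zero_right]; simp
  set y₀ : ℝ := (Φ z).im with hy₀
  set ζ : ℂ → ℂ := fun w => (c:ℂ) * (Φ w - (y₀:ℂ) * Complex.I) with hζ
  have hre : ∀ w ∈ Metric.ball (0:ℂ) 1, |(ζ w).re| ≤ Real.pi / 4 := by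
    intro w hw
    have : (ζ w).re = c * (Φ w).re := by simp [hζ, Complex.re_ofReal_mul]
    rw [this, abs_mul, _root_.abs_of_nonneg hcpos.le]
    calc c * |(Φ w).re| ≤ c * N := by
          exact mul_le_mul_of_nonneg_left (hb w hw) hcpos.le
      _ = Real.pi / 4 := by rw [hc]; field_simp
  set G : ℂ → ℂ := fun w => Complex.tan (ζ w) with hG
  have hGd : DifferentiableOn ℂ G (Metric.ball z (1 - ‖z‖)) := by
    intro w hw
    have hw1 := hsub hw
    have h1 : DifferentiableAt ℂ Φ w := hΦ.differentiableAt (isOpen_ball.mem_nhds hw1)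
    have h2 : DifferentiableAt ℂ ζ w := by
      apply DifferentiableAt.const_mul
      exact h1.sub_const _
    have h3 : DifferentiableAt ℂ Complex.tan (ζ w) :=
      Complex.differentiableAt_tan.2 (aux_cos_ne_zero_s16 (hre w hw1))
    exact (h3.comp w h2).differentiableWithinAt
  have hGb : ∀ w ∈ Metric.ball (0:ℂ) 1, ‖G w‖ ≤ 1 := fun w hw =>
    aux_abs_tan_le_one (hre w hw)
  have hmaps : Set.MapsTo G (Metric.ball z (1 - ‖z‖)) (Metric.ball (G z) 3) := by
    intro w hw
    rw [mem_ball]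
    calc dist (G w) (G z) ≤ dist (G w) 0 + dist 0 (G z) := dist_triangle _ _ _
      _ = ‖G w‖ + ‖G z‖ := by
          rw [dist_zero_right, dist_comm, dist_zero_right]
      _ ≤ 1 + 1 := add_le_add (hGb w (hsub hw)) (hGb z (hsub (mem_ball_self hR)))
      _ < 3 := by norm_num
  have hschwarz := Complex.norm_deriv_le_div_of_mapsTo_ball hGd (hmaps.mono_right ball_subset_closedBall) hR
  -- compute deriv G z
  have hΦz : HasDerivAt Φ (deriv Φ z) z :=
    (hΦ.differentiableAt (isOpen_ball.mem_nhds hz)).hasDerivAt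
  have hζz : HasDerivAt ζ ((c:ℂ) * deriv Φ z) z := (hΦz.sub_const _).const_mul _
  have hcosz := aux_cos_ne_zero_s16 (hre z hz)
  have htanz : HasDerivAt Complex.tan (1 / Complex.cos (ζ z)^2) (ζ z) :=
    Complex.hasDerivAt_tan hcosz
  have hGz : HasDerivAt G ((1 / Complex.cos (ζ z)^2) * ((c:ℂ) * deriv Φ z)) z :=
    htanz.comp z hζz
  -- ζ z is real
  have h1 : Φ z - (y₀:ℂ) * Complex.I = ((Φ z).re : ℂ) := by
    rw [← Complex.re_add_im (Φ z)]; push_cast [hy₀]; ring_nf; simp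
  have hζzre : ζ z = ((c * (Φ z).re : ℝ) : ℂ) := by
    show (c:ℂ) * (Φ z - (y₀:ℂ) * Complex.I) = _
    rw [h1]; push_cast; ring
  have hcosle : ‖Complex.cos (ζ z)‖ ≤ 1 := by
    rw [hζzre, ← Complex.ofReal_cos, Complex.norm_real, Real.norm_eq_abs]
    exact Real.abs_cos_le_one _
  have hcpos' : 0 < ‖Complex.cos (ζ z)‖ := norm_pos_iff.2 hcosz
  have hfactor : (1:ℝ) ≤ ‖1 / Complex.cos (ζ z)^2‖ := by
    rw [norm_div, norm_one, norm_pow]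
    rw [le_div_iff₀ (by positivity)]
    nlinarith
  have hkey : c * ‖deriv Φ z‖ ≤ 3 / (1 - ‖z‖) := by
    calc c * ‖deriv Φ z‖
        ≤ ‖1 / Complex.cos (ζ z)^2‖ * (c * ‖deriv Φ z‖) := by
          nlinarith [norm_nonneg (deriv Φ z), hfactor, mul_nonneg hcpos.le (norm_nonneg (deriv Φ z))]
      _ = ‖deriv G z‖ := by
          rw [hGz.deriv, norm_mul, norm_mul, Complex.norm_real, Real.norm_eq_abs, _root_.abs_of_nonneg hcpos.le]
      _ ≤ 3 / (1 - ‖z‖) := hschwarz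
  have h2 : c * ‖deriv Φ z‖ * (1 - ‖z‖) ≤ 3 :=
    (le_div_iff₀ hR).1 hkey
  rw [hc, div_mul_eq_mul_div, div_mul_eq_mul_div, div_le_iff₀ (by positivity : (0:ℝ) < 4*N)] at h2
  rw [le_div_iff₀ (by positivity : (0:ℝ) < Real.pi * (1 - ‖z‖))]
  nlinarith [h2]

open Metric in
/-- If `f = h + conj g` is a `K`-quasiconformal harmonic mapping of the unit disk onto a
bounded domain `D`, then for all `r ∈ (0,1)` and `θ ∈ [0,2π]`,
`ℓ*_f(θ,r) ≤ 8K · sup_{z∈𝔻}|f(z)| · log((1+r)/(1−r))`. -/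
theorem qc_harmonic_radial_length_bound (h g f : ℂ → ℂ) (K N : ℝ) (hK : 1 ≤ K)
    (hh : DifferentiableOn ℂ h (Metric.ball 0 1))
    (hg : DifferentiableOn ℂ g (Metric.ball 0 1))
    (hf : ∀ z ∈ Metric.ball (0:ℂ) 1, f z = h z + (starRingEnd ℂ) (g z))
    (hqc : ∀ z ∈ Metric.ball (0:ℂ) 1,
      ‖deriv h z‖ + ‖deriv g z‖ ≤
        K * (‖deriv h z‖ - ‖deriv g z‖))
    (D : Set ℂ) (hDo : IsOpen D) (hDb : Bornology.IsBounded D) (hDc : IsConnected D)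
    (hbij : Set.BijOn f (Metric.ball 0 1) D)
    (hN : IsLUB ((fun z => ‖f z‖) '' Metric.ball 0 1) N) :
    ∀ r ∈ Set.Ioo (0:ℝ) 1, ∀ θ ∈ Set.Icc (0:ℝ) (2 * Real.pi),
      (∫ ρ in (0:ℝ)..r,
        ‖(deriv h ((ρ : ℂ) * Complex.exp ((θ : ℂ) * Complex.I)) +
            Complex.exp (((-2 * θ : ℝ) : ℂ) * Complex.I) *
              (starRingEnd ℂ)
                (deriv g ((ρ : ℂ) * Complex.exp ((θ : ℂ) * Complex.I))))‖) ≤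
      8 * K * N * Real.log ((1 + r) / (1 - r)) := by
  have hπ : (0:ℝ) < Real.pi := Real.pi_pos
  have hπ3 : (3:ℝ) < Real.pi := Real.pi_gt_three
  have h0mem : (0:ℂ) ∈ Metric.ball (0:ℂ) 1 := Metric.mem_ball_self one_pos
  have habs : ∀ z ∈ Metric.ball (0:ℂ) 1, ‖f z‖ ≤ N := fun z hz =>
    hN.1 ⟨z, hz, rfl⟩
  have hN0 : 0 ≤ N := le_trans (norm_nonneg _) (habs 0 h0mem)
  -- N > 0
  have hNpos : 0 < N := by
    rcases hN0.lt_or_eq with hp | he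
    · exact hp
    · exfalso
      have hfz : ∀ z ∈ Metric.ball (0:ℂ) 1, f z = 0 := by
        intro z hz
        have := habs z hz
        rw [← he] at this
        exact norm_eq_zero.1 (le_antisymm this (norm_nonneg _))
      have hf0 : f 0 ∈ D := hbij.mapsTo h0mem
      obtain ⟨ε, hε, hballD⟩ := Metric.isOpen_iff.1 hDo (f 0) hf0
      have hf00 : f 0 = 0 := hfz 0 h0mem
      have hmem : ((ε/2 : ℝ) : ℂ) ∈ D := by
        apply hballD
        rw [mem_ball, hf00, dist_zero_right]
        simp [abs_of_pos hε]
        linarith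
      obtain ⟨w, hw, hweq⟩ := (Set.BijOn.image_eq hbij) ▸ hmem
      rw [hfz w hw] at hweq
      have : (ε/2 : ℝ) = 0 := by exact_mod_cast hweq.symm
      linarith
  -- key pointwise derivative bound
  have key : ∀ z ∈ Metric.ball (0:ℂ) 1,
      ‖deriv h z‖ + ‖deriv g z‖ ≤
        24 * N / (Real.pi * (1 - ‖z‖)) := by
    intro z hz
    have hda : DifferentiableAt ℂ h z := hh.differentiableAt (isOpen_ball.mem_nhds hz)
    have hdb : DifferentiableAt ℂ g z := hg.differentiableAt (isOpen_ball.mem_nhds hz)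
    set a := deriv h z with ha
    set b := deriv g z with hb
    -- Φ₁ = h+g
    have hΦ₁ : ‖a + b‖ ≤ 12 * N / (Real.pi * (1 - ‖z‖)) := by
      have hd : DifferentiableOn ℂ (fun w => h w + g w) (Metric.ball 0 1) := hh.add hg
      have hre : ∀ w ∈ Metric.ball (0:ℂ) 1, |((fun w => h w + g w) w).re| ≤ N := by
        intro w hw
        have h1 : (h w + g w).re = (f w).re := by
          rw [hf w hw]; simp [Complex.add_re, Complex.conj_re]
        rw [h1]
        exact le_trans (Complex.abs_re_le_norm _) (habs w hw)
      have := deriv_bound_of_re_bounded _ N hNpos hd hre z hz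
      have hd' : deriv (fun w => h w + g w) z = a + b :=
        (hda.hasDerivAt.add hdb.hasDerivAt).deriv
      rwa [hd'] at this
    -- Φ₂ = -I*(h-g)
    have hΦ₂ : ‖a - b‖ ≤ 12 * N / (Real.pi * (1 - ‖z‖)) := by
      have hd : DifferentiableOn ℂ (fun w => -Complex.I * (h w - g w)) (Metric.ball 0 1) :=
        (hh.sub hg).const_mul _
      have hre : ∀ w ∈ Metric.ball (0:ℂ) 1,
          |((fun w => -Complex.I * (h w - g w)) w).re| ≤ N := by
        intro w hw
        have h1 : (-Complex.I * (h w - g w)).re = (f w).im := by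
          rw [hf w hw]
          simp [Complex.mul_re, Complex.add_im, Complex.conj_im, Complex.sub_im,
            Complex.sub_re]
          ring
        rw [h1]
        exact le_trans (Complex.abs_im_le_norm _) (habs w hw)
      have := deriv_bound_of_re_bounded _ N hNpos hd hre z hz
      have hd' : deriv (fun w => -Complex.I * (h w - g w)) z = -Complex.I * (a - b) :=
        ((hda.hasDerivAt.sub hdb.hasDerivAt).const_mul _).deriv
      rw [hd', norm_mul] at this
      simpa using this
    have h2a : 2 * ‖a‖ ≤ ‖a + b‖ + ‖a - b‖ := by
      have : (2:ℂ) * a = (a + b) + (a - b) := by ring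
      calc 2 * ‖a‖ = ‖(a+b) + (a-b)‖ := by
            rw [← this, norm_mul]; simp
        _ ≤ _ := norm_add_le _ _
    have h2b : 2 * ‖b‖ ≤ ‖a + b‖ + ‖a - b‖ := by
      have heq : (2:ℂ) * b = (a + b) + -(a - b) := by ring
      calc 2 * ‖b‖ = ‖(a+b) + -(a-b)‖ := by
            rw [← heq, norm_mul]; simp
        _ ≤ ‖a+b‖ + ‖-(a-b)‖ := norm_add_le _ _
        _ = ‖a+b‖ + ‖a-b‖ := by rw [norm_neg]
    have hdouble : 24 * N / (Real.pi * (1 - ‖z‖)) =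
        12 * N / (Real.pi * (1 - ‖z‖)) + 12 * N / (Real.pi * (1 - ‖z‖)) := by
      ring
    linarith
  intro r hr θ hθ
  obtain ⟨hr0, hr1⟩ := hr
  -- membership of radial points
  have hzmem : ∀ ρ ∈ Set.Icc (0:ℝ) r,
      ((ρ:ℂ) * Complex.exp ((θ:ℂ) * Complex.I)) ∈ Metric.ball (0:ℂ) 1 := by
    intro ρ hρ
    rw [mem_ball, dist_zero_right]
    simp only [norm_mul, Complex.norm_real, Real.norm_eq_abs,
      Complex.norm_exp_ofReal_mul_I, mul_one]
    rw [abs_of_nonneg hρ.1]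
    exact lt_of_le_of_lt hρ.2 hr1
  have habsz : ∀ ρ ∈ Set.Icc (0:ℝ) r,
      ‖(ρ:ℂ) * Complex.exp ((θ:ℂ) * Complex.I)‖ = ρ := by
    intro ρ hρ
    rw [norm_mul, Complex.norm_real, Real.norm_eq_abs, Complex.norm_exp_ofReal_mul_I, mul_one,
      abs_of_nonneg hρ.1]
  set M : ℝ → ℝ := fun ρ => 8*K*N*(1/(1+ρ) + 1/(1-ρ)) with hM
  set I : ℝ → ℝ := fun ρ => ‖deriv h ((ρ : ℂ) * Complex.exp ((θ : ℂ) * Complex.I)) +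
            Complex.exp (((-2 * θ : ℝ) : ℂ) * Complex.I) *
              (starRingEnd ℂ)
                (deriv g ((ρ : ℂ) * Complex.exp ((θ : ℂ) * Complex.I)))‖ with hI
  -- pointwise bound
  have hpt : ∀ ρ ∈ Set.Icc (0:ℝ) r, I ρ ≤ M ρ := by
    intro ρ hρ
    have h1ρ : 0 < 1 - ρ := by have := hρ.2; linarith
    have h1ρ' : 0 < 1 + ρ := by have := hρ.1; linarith
    set z := (ρ:ℂ) * Complex.exp ((θ:ℂ) * Complex.I) with hz
    have hzm := hzmem ρ hρ
    have e1 : I ρ ≤ ‖deriv h z‖ + ‖deriv g z‖ := by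
      refine le_trans (norm_add_le _ _) ?_
      rw [norm_mul, Complex.norm_exp_ofReal_mul_I, one_mul, Complex.norm_conj]
    have e2 := key z hzm
    rw [habsz ρ hρ] at e2
    have e3 : 24 * N / (Real.pi * (1 - ρ)) ≤ M ρ := by
      show 24 * N / (Real.pi * (1 - ρ)) ≤ 8*K*N*(1/(1+ρ) + 1/(1-ρ))
      have hsum : 1/(1+ρ) + 1/(1-ρ) = 2/((1+ρ)*(1-ρ)) := by
        field_simp; ring
      have hrw : 8*K*N*(2/((1+ρ)*(1-ρ))) = 16*K*N/((1+ρ)*(1-ρ)) := by ring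
      rw [hsum, hrw, div_le_div_iff₀ (by positivity) (by positivity)]
      have hA : 0 ≤ N*(1-ρ) := mul_nonneg hN0 h1ρ.le
      have hKπ : 3 ≤ K*Real.pi := by nlinarith
      have h5 : ρ ≤ 1 := by linarith
      nlinarith [mul_nonneg hA (sub_nonneg.2 hKπ), mul_nonneg hA (sub_nonneg.2 h5)]
    linarith
  -- integrability of I
  have hcI : ContinuousOn I (Set.Icc (0:ℝ) r) := by
    have hmap : Set.MapsTo (fun ρ : ℝ => (ρ:ℂ) * Complex.exp ((θ:ℂ) * Complex.I))
        (Set.Icc (0:ℝ) r) (Metric.ball (0:ℂ) 1) := fun ρ hρ => hzmem ρ hρ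
    have hcz : Continuous (fun ρ : ℝ => (ρ:ℂ) * Complex.exp ((θ:ℂ) * Complex.I)) :=
      (Complex.continuous_ofReal).mul continuous_const
    have hdh : ContinuousOn (deriv h) (Metric.ball (0:ℂ) 1) :=
      ((hh.analyticOnNhd isOpen_ball).deriv).continuousOn
    have hdg : ContinuousOn (deriv g) (Metric.ball (0:ℂ) 1) :=
      ((hg.analyticOnNhd isOpen_ball).deriv).continuousOn
    have c1 : ContinuousOn (fun ρ : ℝ => deriv h ((ρ:ℂ) * Complex.exp ((θ:ℂ) * Complex.I)))
        (Set.Icc (0:ℝ) r) := hdh.comp hcz.continuousOn hmap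
    have c2 : ContinuousOn (fun ρ : ℝ => deriv g ((ρ:ℂ) * Complex.exp ((θ:ℂ) * Complex.I)))
        (Set.Icc (0:ℝ) r) := hdg.comp hcz.continuousOn hmap
    exact continuous_norm.comp_continuousOn
      (c1.add (continuousOn_const.mul (Complex.continuous_conj.comp_continuousOn c2)))
  have hintI : IntervalIntegrable I volume 0 r := by
    apply ContinuousOn.intervalIntegrable
    rwa [Set.uIcc_of_le hr0.le]
  have hcM : ContinuousOn M (Set.Icc (0:ℝ) r) := by
    apply continuousOn_const.mul
    apply ContinuousOn.add
    · exact continuousOn_const.div (by fun_prop)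
        (fun x hx => ne_of_gt (show (0:ℝ) < 1 + x by nlinarith [hx.1]))
    · exact continuousOn_const.div (by fun_prop)
        (fun x hx => ne_of_gt (show (0:ℝ) < 1 - x by nlinarith [lt_of_le_of_lt hx.2 hr1]))
  have hintM : IntervalIntegrable M volume 0 r := by
    apply ContinuousOn.intervalIntegrable
    rwa [Set.uIcc_of_le hr0.le]
  -- FTC for M
  have hFTC : (∫ ρ in (0:ℝ)..r, M ρ) = 8*K*N*(Real.log (1+r) - Real.log (1-r)) := by
    have hder : ∀ ρ ∈ Set.uIcc (0:ℝ) r,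
        HasDerivAt (fun x => 8*K*N*(Real.log (1+x) - Real.log (1-x))) (M ρ) ρ := by
      intro ρ hρ
      rw [Set.uIcc_of_le hr0.le] at hρ
      have h1ρ : 0 < 1 - ρ := by have := hρ.2; linarith
      have h1ρ' : 0 < 1 + ρ := by have := hρ.1; linarith
      have h2 : HasDerivAt (fun x : ℝ => 1 + x) 1 ρ := by
        simpa using (hasDerivAt_id ρ).const_add (1:ℝ)
      have h3 : HasDerivAt (fun x : ℝ => 1 - x) (-1) ρ := by
        simpa using (hasDerivAt_id ρ).const_sub (1:ℝ)
      have d1 : HasDerivAt (fun x : ℝ => Real.log (1+x)) ((1+ρ)⁻¹ * 1) ρ :=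
        (Real.hasDerivAt_log (by linarith)).comp ρ h2
      have d2 : HasDerivAt (fun x : ℝ => Real.log (1-x)) ((1-ρ)⁻¹ * (-1)) ρ :=
        (Real.hasDerivAt_log (by linarith)).comp ρ h3
      have hd : HasDerivAt (fun x => 8*K*N*(Real.log (1+x) - Real.log (1-x)))
          (8*K*N*((1+ρ)⁻¹ * 1 - (1-ρ)⁻¹ * (-1))) ρ := ((d1.sub d2).const_mul (8*K*N))
      convert hd using 1
      show 8*K*N*(1/(1+ρ) + 1/(1-ρ)) = _
      field_simp; ring
    rw [intervalIntegral.integral_eq_sub_of_hasDerivAt hder hintM]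
    simp
  have hlog : Real.log ((1+r)/(1-r)) = Real.log (1+r) - Real.log (1-r) :=
    Real.log_div (by linarith) (by linarith)
  calc (∫ ρ in (0:ℝ)..r, I ρ) ≤ ∫ ρ in (0:ℝ)..r, M ρ := by
        apply intervalIntegral.integral_mono_on hr0.le hintI hintM hpt
    _ = 8*K*N*Real.log ((1+r)/(1-r)) := by rw [hFTC, hlog]
end
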